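/- arXiv:2112.06546 — 4 statements merged into one kernel-verified Lean document; each statement's English description precedes it below -/
import Mathlib

section
/- For the uncontrolled SIR dynamics on [a,b], ∫_a^b i(t)² dt = γ·([ln s(a)]² - [ln s(b)]²)/(2β²) - (s(a) - s(b))/β + (s(a) + i(a) - (γ/β)·ln s(a))·(r(b) - r(a))/γ. -/
/-- Lemma 1 of the paper: for the uncontrolled SIR dynamics on [a,b],
∫_a^b i² = γ([ln s(a)]² - [ln s(b)]²)/(2β²) - (s(a)-s(b))/β
  + (s(a)+i(a)-(γ/β) ln s(a))·(r(b)-r(a))/γ. -/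
theorem sir_int_i_sq (β γ : ℝ) (hβ : 0 < β) (hγ : 0 < γ)
    (a b : ℝ) (hab : a ≤ b)
    (s i r : ℝ → ℝ)
    (hs : ∀ t, HasDerivAt s (-β * s t * i t) t)
    (hi : ∀ t, HasDerivAt i (β * s t * i t - γ * i t) t)
    (hr : ∀ t, HasDerivAt r (γ * i t) t)
    (hspos : ∀ t ∈ Set.Icc a b, 0 < s t) :
    ∫ t in a..b, (i t)^2 =
      γ * ((Real.log (s a))^2 - (Real.log (s b))^2) / (2 * β^2)
      - (s a - s b) / β
      + (s a + i a - (γ / β) * Real.log (s a)) * (r b - r a) / γ := by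
  set C : ℝ := s a + i a - (γ / β) * Real.log (s a) with hC
  -- derivative of log ∘ s on Icc a b
  have hL : ∀ t ∈ Set.Icc a b, HasDerivAt (fun u => Real.log (s u)) (-β * i t) t := by
    intro t ht
    have hne : s t ≠ 0 := (hspos t ht).ne'
    have := (hs t).log hne
    convert this using 1
    field_simp
  -- conservation: F t := i t + s t - (γ/β) log (s t) constant on Icc a b
  have hconsF : ∀ t ∈ Set.Icc a b,
      i t + s t - (γ / β) * Real.log (s t) = i a + s a - (γ / β) * Real.log (s a) := by
    have hcont : ContinuousOn (fun u => i u + s u - (γ / β) * Real.log (s u)) (Set.Icc a b) := by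
      intro t ht
      exact (((hi t).continuousAt.add (hs t).continuousAt).sub
        (((hL t ht).continuousAt).const_mul (γ / β))).continuousWithinAt
    have hderiv : ∀ t ∈ Set.Ico a b,
        HasDerivWithinAt (fun u => i u + s u - (γ / β) * Real.log (s u)) 0 (Set.Ici t) t := by
      intro t ht
      have ht' : t ∈ Set.Icc a b := Set.mem_Icc_of_Ico ht
      have := (((hi t).add (hs t)).sub ((hL t ht').const_mul (γ / β)))
      have h0 : β * s t * i t - γ * i t + -β * s t * i t - γ / β * (-β * i t) = 0 := by
        field_simp; ring
      rw [h0] at this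
      exact this.hasDerivWithinAt
    exact fun t ht => constant_of_has_deriv_right_zero hcont hderiv t ht
  have hcons : ∀ t ∈ Set.Icc a b, i t = C - s t + (γ / β) * Real.log (s t) := by
    intro t ht
    have := hconsF t ht
    rw [hC]; linarith
  -- antiderivative
  set G : ℝ → ℝ := fun t => C * r t / γ + s t / β - γ * (Real.log (s t))^2 / (2 * β^2) with hG
  have hGderiv : ∀ t ∈ Set.uIcc a b, HasDerivAt G ((i t)^2) t := by
    intro t ht
    rw [Set.uIcc_of_le hab] at ht
    have h1 : HasDerivAt G (C * (γ * i t) / γ + (-β * s t * i t) / β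
        - γ * ((2:ℕ) * Real.log (s t) ^ 1 * (-β * i t)) / (2 * β^2)) t :=
      ((((hr t).const_mul C).div_const γ).add ((hs t).div_const β)).sub
        ((((hL t ht).pow 2).const_mul γ).div_const (2 * β^2))
    convert h1 using 1
    have hit := hcons t ht
    rw [hit]
    field_simp
    ring
  have hint : IntervalIntegrable (fun t => (i t)^2) MeasureTheory.volume a b := by
    have : Continuous i := continuous_iff_continuousAt.mpr fun t => (hi t).differentiableAt.continuousAt
    exact (this.pow 2).intervalIntegrable a b
  rw [intervalIntegral.integral_eq_sub_of_hasDerivAt hGderiv hint]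
  rw [hG, hC]
  field_simp
  ring
end

section
/- For all y ∈ [0,1], 1 - √y ≥ (27/32)·(1 - y)². -/
/-- For all y ∈ [0,1], 1 - √y ≥ (27/32)·(1 - y)². -/
theorem one_sub_sqrt_ge (y : ℝ) (hy0 : 0 ≤ y) (hy1 : y ≤ 1) :
    1 - Real.sqrt y ≥ (27 / 32) * (1 - y)^2 := by
  have hs : Real.sqrt y ^ 2 = y := Real.sq_sqrt hy0
  have h0 : 0 ≤ Real.sqrt y := Real.sqrt_nonneg y
  have h1 : Real.sqrt y ≤ 1 := by
    rw [show (1:ℝ) = Real.sqrt 1 by simp]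
    exact Real.sqrt_le_sqrt hy1
  nlinarith [sq_nonneg (3 * Real.sqrt y - 1), mul_nonneg (sq_nonneg (3 * Real.sqrt y - 1)) h0, sq_nonneg (1 - Real.sqrt y)]
end

section
/- Under Policy A Phase I dynamics, the time t* at which s(t*) = ργ/β equals ln(1 - (ργ - βs₀)/(βνi₀)) / ((ρ-1)γ), where ν = ρ/(ρ-1), provided ργ < β·s₀ (so the argument of the logarithm lies in (0,1)). -/
/-- Under Policy A Phase I dynamics with βs₀ > ργ, at
t* = ln(1 - (ργ - βs₀)/(βνi₀)) / ((ρ-1)γ), with ν = ρ/(ρ-1), one has s(t*) = ργ/β. -/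
theorem policyA_tstar (β γ ρ i₀ s₀ : ℝ) (hβ : 0 < β) (hγ : 0 < γ)
    (hρ : 1 < ρ) (hi₀ : 0 < i₀) (hs₀ : 0 < s₀) (hsup : ρ * γ < β * s₀)
    (ν : ℝ) (hν : ν = ρ / (ρ - 1))
    (i s : ℝ → ℝ)
    (hi : ∀ t, i t = i₀ * Real.exp ((ρ - 1) * γ * t))
    (hs : ∀ t, s t = s₀ + ν * (i₀ - i t)) :
    s (Real.log (1 - (ρ * γ - β * s₀) / (β * ν * i₀)) / ((ρ - 1) * γ)) =
      ρ * γ / β := by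
  have hρ1 : 0 < ρ - 1 := by linarith
  have hν0 : 0 < ν := by rw [hν]; positivity
  have hd : 0 < (ρ - 1) * γ := by positivity
  have hbvi : 0 < β * ν * i₀ := by positivity
  have hA : 0 < 1 - (ρ * γ - β * s₀) / (β * ν * i₀) := by
    have : (ρ * γ - β * s₀) / (β * ν * i₀) < 0 := div_neg_of_neg_of_pos (by linarith) hbvi
    linarith
  have hexp : Real.exp ((ρ - 1) * γ *
      (Real.log (1 - (ρ * γ - β * s₀) / (β * ν * i₀)) / ((ρ - 1) * γ))) =
      1 - (ρ * γ - β * s₀) / (β * ν * i₀) := by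
    rw [mul_div_cancel₀ _ hd.ne', Real.exp_log hA]
  rw [hs, hi, hexp]
  field_simp
  ring
end

section
/- If Δτ = (S - γ/β)/(γι) with S ≥ γ/β, then Δτ - (2/(βι))·(√(1 + Δτ·βι) - 1) = (1/ι)·(√(S/γ) - √(1/β))². -/
/-- If Δτ = (S - γ/β)/(γι) with S ≥ γ/β, then
Δτ - (2/(βι))(√(1 + Δτβι) - 1) = (1/ι)(√(S/γ) - √(1/β))². -/
theorem policyB_eco_closed_form (β γ ι S : ℝ) (hβ : 0 < β) (hγ : 0 < γ)
    (hι : 0 < ι) (hS : γ / β ≤ S) :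
    (S - γ / β) / (γ * ι)
      - (2 / (β * ι)) * (Real.sqrt (1 + ((S - γ / β) / (γ * ι)) * β * ι) - 1) =
      (1 / ι) * (Real.sqrt (S / γ) - Real.sqrt (1 / β))^2 := by
  have hS0 : 0 ≤ S := le_trans (le_of_lt (div_pos hγ hβ)) hS
  set a := Real.sqrt (S / γ) with ha_def
  set b := Real.sqrt (1 / β) with hb_def
  have ha : a ^ 2 = S / γ := Real.sq_sqrt (div_nonneg hS0 hγ.le)
  have hb : b ^ 2 = 1 / β := Real.sq_sqrt (by positivity)
  have hb0 : 0 < b := Real.sqrt_pos.mpr (by positivity)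
  have ha0 : 0 ≤ a := Real.sqrt_nonneg _
  have key : 1 + ((S - γ / β) / (γ * ι)) * β * ι = (a / b) ^ 2 := by
    rw [div_pow, ha, hb]
    field_simp
    ring
  rw [key, Real.sqrt_sq (by positivity)]
  have hβb : β * b ^ 2 = 1 := by rw [hb]; field_simp
  have haγ : a ^ 2 * γ = S := by rw [ha]; field_simp
  have hβ' : β = 1 / b ^ 2 := by
    field_simp [hb0.ne'] at hβb ⊢; linarith
  rw [← haγ, hβ']
  field_simp
  ring
end
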